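/- Fix o ∈ X, and let f ∈ L(X°) and g ∈ L(∂X). The bi-Laplace Neumann problem (Δ²u = f on X° and ∂_n u = g on ∂X) has a solution u ∈ L(X) if and only if ∫_{X°} (G_{X°} f) dπ + ∑_{y∈∂X} ν_π(y)·g(y) = 0, where ν_π(y) = π(y) + ∑_{x∈X°} π(x)ν_x(y). In that case the set of all solutions is exactly { G_{X∖{o}} G_{X°} f + G_{X∖{o}} h + c : c ∈ ℂ }, where h ∈ L(X) is given by h(x) = ∫_{∂X} g dν_x (so in particular h = g on ∂X), and G_{X∖{o}}, G_{X°} are regarded as X×X matrices with zero entries outside (X∖{o})×(X∖{o}) resp. X°×X°. -/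
import Mathlib


open Matrix Finset

/-- The Laplacian `Δu = Pu − u` acting on complex functions. -/
noncomputable def lap {X : Type*} [Fintype X] (P : Matrix X X ℝ) (u : X → ℂ) (x : X) : ℂ :=
  (∑ y, (P x y : ℂ) * u y) - u x

/-- The `A × A` submatrix of `P`. -/
def subMatrix {X : Type*} (P : Matrix X X ℝ) (A : Finset X) : Matrix A A ℝ :=
  Matrix.of fun x y => P x.1 y.1

/-- The Green kernel `G_A = (I_A − P_A)⁻¹`. -/
noncomputable def green {X : Type*} [DecidableEq X] (P : Matrix X X ℝ) (A : Finset X) :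
    Matrix A A ℝ :=
  (1 - subMatrix P A)⁻¹

/-- `G_A` regarded as an `X × X` matrix with zero entries outside `A × A`. -/
noncomputable def greenExt {X : Type*} [DecidableEq X] (P : Matrix X X ℝ) (A : Finset X) :
    Matrix X X ℝ :=
  Matrix.of fun x y =>
    if hx : x ∈ A then (if hy : y ∈ A then green P A ⟨x, hx⟩ ⟨y, hy⟩ else 0) else 0

/-- A real matrix acting on complex functions. -/
noncomputable def mulVecC {m n : Type*} [Fintype n] (M : Matrix m n ℝ) (f : n → ℂ) (x : m) : ℂ :=
  ∑ y, (M x y : ℂ) * f y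

/-- The hitting distributions `ν_x` on the boundary `B` (interior `A`):
`ν_x = (G_A P_{A,B})(x,·)` for `x ∈ A`, and `ν_x = δ_x` for `x ∈ B`. -/
noncomputable def nuGen {X : Type*} [DecidableEq X] (P : Matrix X X ℝ) (A B : Finset X)
    (x y : X) : ℝ :=
  if x ∈ B then (if x = y then 1 else 0)
  else if hx : x ∈ A then
    (if y ∈ B then ∑ w : A, green P A ⟨x, hx⟩ w * P w.1 y else 0)
  else 0

set_option linter.unusedSectionVars false
set_option linter.unusedVariables false

section Aux
variable {X : Type*} [Fintype X] [DecidableEq X] (P : Matrix X X ℝ)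

variable {X : Type*} [Fintype X] [DecidableEq X] (P : Matrix X X ℝ)

lemma pow_entry_nonneg (hnonneg : ∀ x y, 0 ≤ P x y) : ∀ n x y, 0 ≤ (P ^ n) x y := by
  intro n
  induction n with
  | zero =>
    intro x y
    rw [pow_zero, Matrix.one_apply]
    split <;> norm_num
  | succ n ih =>
    intro x y
    rw [pow_succ, Matrix.mul_apply]
    exact Finset.sum_nonneg fun w _ => mul_nonneg (ih x w) (hnonneg w y)

lemma propagate (hnonneg : ∀ x y, 0 ≤ P x y) (hrow : ∀ x, ∑ y, P x y = 1)
    (u : X → ℝ) (m : ℝ) (hm : ∀ z, u z ≤ m)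
    (hh : ∀ z, u z = m → u z = ∑ w, P z w * u w) :
    ∀ n x y, 0 < (P ^ n) x y → u x = m → u y = m := by
  intro n
  induction n with
  | zero =>
    intro x y hpos hx
    rw [pow_zero, Matrix.one_apply] at hpos
    by_cases h : x = y
    · exact h ▸ hx
    · rw [if_neg h] at hpos; exact absurd hpos (lt_irrefl 0)
  | succ n ih =>
    intro x y hpos hx
    rw [pow_succ', Matrix.mul_apply] at hpos
    have hex : ∃ w, 0 < P x w * (P ^ n) w y := by
      by_contra h
      push_neg at h
      have := Finset.sum_nonpos (fun w (_ : w ∈ Finset.univ) => h w)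
      linarith
    obtain ⟨w, hw⟩ := hex
    have hPn : 0 ≤ (P ^ n) w y := pow_entry_nonneg P hnonneg n w y
    have hPxw : 0 < P x w := by
      rcases (hnonneg x w).lt_or_eq with h | h
      · exact h
      · rw [← h, zero_mul] at hw; exact absurd hw (lt_irrefl 0)
    have hPny : 0 < (P ^ n) w y := by
      rcases hPn.lt_or_eq with h | h
      · exact h
      · rw [← h, mul_zero] at hw; exact absurd hw (lt_irrefl 0)
    have key : ∑ w', P x w' * (m - u w') = 0 := by
      have h2 := hh x hx
      have h3 : ∑ w', P x w' * m = m := by rw [← Finset.sum_mul, hrow, one_mul]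
      have h4 : ∑ w', P x w' * (m - u w') = (∑ w', P x w' * m) - ∑ w', P x w' * u w' := by
        rw [← Finset.sum_sub_distrib]
        exact Finset.sum_congr rfl fun w' _ => by ring
      rw [h4, h3, ← h2, hx, sub_self]
    have hterm := (Finset.sum_eq_zero_iff_of_nonneg
      (fun w' _ => mul_nonneg (hnonneg x w') (by linarith [hm w']))).mp key w (Finset.mem_univ w)
    have huw : u w = m := by
      rcases mul_eq_zero.mp hterm with h | h
      · exact absurd h (ne_of_gt hPxw)
      · linarith
    exact ih w y hPny huw

lemma harm_nonpos (hnonneg : ∀ x y, 0 ≤ P x y) (hrow : ∀ x, ∑ y, P x y = 1)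
    (hirr : ∀ x y, ∃ n, 1 ≤ n ∧ 0 < (P ^ n) x y)
    (A : Finset X) {z₀ : X} (hz₀ : z₀ ∉ A)
    (u : X → ℝ) (hu0 : ∀ x, x ∉ A → u x = 0)
    (hharm : ∀ x ∈ A, u x = ∑ w, P x w * u w) : ∀ x, u x ≤ 0 := by
  obtain ⟨x₀, -, hx₀⟩ := Finset.exists_max_image Finset.univ u ⟨z₀, Finset.mem_univ _⟩
  intro x
  by_contra hcon
  push_neg at hcon
  have hmpos : 0 < u x₀ := lt_of_lt_of_le hcon (hx₀ x (Finset.mem_univ x))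
  have hh : ∀ z, u z = u x₀ → u z = ∑ w, P z w * u w := by
    intro z hz
    by_cases hzA : z ∈ A
    · exact hharm z hzA
    · exfalso
      have h0 : u z = 0 := hu0 z hzA
      rw [h0] at hz
      rw [← hz] at hmpos
      exact lt_irrefl 0 hmpos
  obtain ⟨n, -, hpos⟩ := hirr x₀ z₀
  have := propagate P hnonneg hrow u (u x₀) (fun z => hx₀ z (Finset.mem_univ z)) hh n x₀ z₀ hpos rfl
  rw [hu0 z₀ hz₀] at this
  linarith

lemma harm_zero (hnonneg : ∀ x y, 0 ≤ P x y) (hrow : ∀ x, ∑ y, P x y = 1)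
    (hirr : ∀ x y, ∃ n, 1 ≤ n ∧ 0 < (P ^ n) x y)
    (A : Finset X) {z₀ : X} (hz₀ : z₀ ∉ A)
    (u : X → ℝ) (hu0 : ∀ x, x ∉ A → u x = 0)
    (hharm : ∀ x ∈ A, u x = ∑ w, P x w * u w) : ∀ x, u x = 0 := by
  have h1 := harm_nonpos P hnonneg hrow hirr A hz₀ u hu0 hharm
  have h2 := harm_nonpos P hnonneg hrow hirr A hz₀ (fun z => -u z)
    (fun x hx => by simp only [hu0 x hx, neg_zero])
    (fun x hx => by
      simp only [mul_neg]
      rw [Finset.sum_neg_distrib, ← hharm x hx])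
  intro x
  have ha := h1 x
  have hb := h2 x
  simp only [neg_nonpos] at hb
  linarith

lemma harm_const (hnonneg : ∀ x y, 0 ≤ P x y) (hrow : ∀ x, ∑ y, P x y = 1)
    (hirr : ∀ x y, ∃ n, 1 ≤ n ∧ 0 < (P ^ n) x y)
    (u : X → ℝ) (hharm : ∀ x, u x = ∑ w, P x w * u w) (x y : X) : u x = u y := by
  obtain ⟨x₀, -, hx₀⟩ := Finset.exists_max_image Finset.univ u ⟨x, Finset.mem_univ _⟩
  have key : ∀ z, u z = u x₀ := by
    intro z
    obtain ⟨n, -, hpos⟩ := hirr x₀ z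
    exact propagate P hnonneg hrow u (u x₀) (fun w => hx₀ w (Finset.mem_univ w))
      (fun w _ => hharm w) n x₀ z hpos rfl
  rw [key x, key y]


/-- generic helper: sum of a dependent-if over the type equals sum over the subtype -/
lemma sum_dite_mem {M : Type*} [AddCommMonoid M] (A : Finset X) (F : ∀ y, y ∈ A → M) :
    (∑ y : X, if h : y ∈ A then F y h else 0) = ∑ y : A, F y.1 y.2 := by
  have h1 : ∀ y : A, F y.1 y.2 = (fun z => if h : z ∈ A then F z h else 0) y.1 :=
    fun y => (dif_pos y.2).symm
  rw [Finset.sum_congr rfl (fun y _ => h1 y), Finset.sum_coe_sort A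
    (fun z => if h : z ∈ A then F z h else 0)]
  exact (Finset.sum_subset (Finset.subset_univ A) (fun y _ hy => dif_neg hy)).symm

lemma isUnit_det_sub (hnonneg : ∀ x y, 0 ≤ P x y) (hrow : ∀ x, ∑ y, P x y = 1)
    (hirr : ∀ x y, ∃ n, 1 ≤ n ∧ 0 < (P ^ n) x y)
    (A : Finset X) {z₀ : X} (hz₀ : z₀ ∉ A) :
    IsUnit (1 - subMatrix P A).det := by
  rw [isUnit_iff_ne_zero]
  intro hdet
  obtain ⟨v, hv, hv0⟩ := Matrix.exists_mulVec_eq_zero_iff.mpr hdet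
  set u : X → ℝ := fun x => if h : x ∈ A then v ⟨x, h⟩ else 0 with hu
  have hu0 : ∀ x, x ∉ A → u x = 0 := fun x hx => dif_neg hx
  have hharm : ∀ x ∈ A, u x = ∑ w, P x w * u w := by
    intro x hx
    have h1 := congrFun hv0 ⟨x, hx⟩
    rw [Matrix.mulVec, dotProduct] at h1
    simp only [Matrix.sub_apply, Matrix.one_apply, subMatrix, Matrix.of_apply, sub_mul,
      Finset.sum_sub_distrib, ite_mul, one_mul, zero_mul] at h1
    rw [Finset.sum_ite_eq (Finset.univ : Finset A) (⟨x, hx⟩ : A) v] at h1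
    simp only [Finset.mem_univ, if_true] at h1
    have h2 : ∑ w, P x w * u w = ∑ w : A, P x w.1 * v w := by
      have : ∀ w, P x w * u w = (if h : w ∈ A then P x w * v ⟨w, h⟩ else 0) := by
        intro w
        by_cases h : w ∈ A
        · rw [dif_pos h, hu]; simp only [dif_pos h]
        · rw [dif_neg h, hu]; simp only [dif_neg h, mul_zero]
      rw [Finset.sum_congr rfl (fun w _ => this w), sum_dite_mem]
    rw [h2, hu]
    simp only [dif_pos hx]
    simp only [Pi.zero_apply] at h1
    linarith
  have := harm_zero P hnonneg hrow hirr A hz₀ u hu0 hharm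
  apply hv
  funext y
  have := this y.1
  rw [hu] at this
  simp only [dif_pos y.2, Subtype.eta] at this
  exact this

lemma green_mul (hnonneg : ∀ x y, 0 ≤ P x y) (hrow : ∀ x, ∑ y, P x y = 1)
    (hirr : ∀ x y, ∃ n, 1 ≤ n ∧ 0 < (P ^ n) x y)
    (A : Finset X) {z₀ : X} (hz₀ : z₀ ∉ A) :
    (1 - subMatrix P A) * green P A = 1 :=
  Matrix.mul_nonsing_inv _ (isUnit_det_sub P hnonneg hrow hirr A hz₀)

lemma mulVecC_greenExt_of_notMem (A : Finset X) (φ : X → ℂ) {x : X} (hx : x ∉ A) :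
    mulVecC (greenExt P A) φ x = 0 := by
  unfold mulVecC greenExt
  simp [hx]

lemma mulVecC_greenExt_of_mem (A : Finset X) (φ : X → ℂ) {x : X} (hx : x ∈ A) :
    mulVecC (greenExt P A) φ x = ∑ y : A, (green P A ⟨x, hx⟩ y : ℂ) * φ y.1 := by
  unfold mulVecC greenExt
  simp only [Matrix.of_apply, dif_pos hx]
  rw [← sum_dite_mem A (fun y hy => (green P A ⟨x, hx⟩ ⟨y, hy⟩ : ℂ) * φ y)]
  refine Finset.sum_congr rfl fun y _ => ?_
  by_cases hy : y ∈ A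
  · simp [hy]
  · simp [hy]

/-- the key entrywise identity: (1 - P_A) G_A = 1 pointwise -/
lemma green_delta (hnonneg : ∀ x y, 0 ≤ P x y) (hrow : ∀ x, ∑ y, P x y = 1)
    (hirr : ∀ x y, ∃ n, 1 ≤ n ∧ 0 < (P ^ n) x y)
    (A : Finset X) {z₀ : X} (hz₀ : z₀ ∉ A) (a w : A) :
    green P A a w - ∑ y : A, P a.1 y.1 * green P A y w = (if a = w then 1 else 0) := by
  have h := congrFun (congrFun (green_mul P hnonneg hrow hirr A hz₀) a) w
  rw [Matrix.mul_apply, Matrix.one_apply] at h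
  simp only [Matrix.sub_apply, Matrix.one_apply, subMatrix, Matrix.of_apply, sub_mul,
    Finset.sum_sub_distrib, ite_mul, one_mul, zero_mul] at h
  rwa [Finset.sum_ite_eq (Finset.univ : Finset A) a (fun y => green P A y w),
    if_pos (Finset.mem_univ a)] at h

/-- Green equation over ℂ: for x ∈ A, (I - P)(G_A φ)(x) = φ(x) (sums over A) -/
lemma green_eq_C (hnonneg : ∀ x y, 0 ≤ P x y) (hrow : ∀ x, ∑ y, P x y = 1)
    (hirr : ∀ x y, ∃ n, 1 ≤ n ∧ 0 < (P ^ n) x y)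
    (A : Finset X) {z₀ : X} (hz₀ : z₀ ∉ A) (φ : X → ℂ) {x : X} (hx : x ∈ A) :
    mulVecC (greenExt P A) φ x - ∑ y ∈ A, (P x y : ℂ) * mulVecC (greenExt P A) φ y = φ x := by
  have hmem : ∀ (z : X) (hz : z ∈ A), mulVecC (greenExt P A) φ z
      = ∑ w : A, (green P A ⟨z, hz⟩ w : ℂ) * φ w.1 := fun z hz =>
    mulVecC_greenExt_of_mem P A φ hz
  rw [hmem x hx]
  rw [← Finset.sum_coe_sort A (fun y => (P x y : ℂ) * mulVecC (greenExt P A) φ y)]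
  have hrw : ∀ y : A, (P x y.1 : ℂ) * mulVecC (greenExt P A) φ y.1
      = ∑ w : A, (P x y.1 : ℂ) * ((green P A y w : ℂ) * φ w.1) := by
    intro y
    rw [hmem y.1 y.2, Finset.mul_sum]
  rw [Finset.sum_congr rfl (fun y _ => hrw y), Finset.sum_comm, ← Finset.sum_sub_distrib]
  have hstep : ∀ w : A, (green P A ⟨x, hx⟩ w : ℂ) * φ w.1
      - ∑ y : A, (P x y.1 : ℂ) * ((green P A y w : ℂ) * φ w.1)
      = (((if (⟨x, hx⟩ : A) = w then (1:ℝ) else 0) : ℝ) : ℂ) * φ w.1 := by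
    intro w
    have hd := green_delta P hnonneg hrow hirr A hz₀ ⟨x, hx⟩ w
    have h2 : ((green P A ⟨x, hx⟩ w - ∑ y : A, P x y.1 * green P A y w : ℝ) : ℂ) * φ w.1
        = (((if (⟨x, hx⟩ : A) = w then (1:ℝ) else 0) : ℝ) : ℂ) * φ w.1 := by rw [hd]
    rw [← h2]
    push_cast
    rw [sub_mul, Finset.sum_mul]
    congr 1
    exact Finset.sum_congr rfl fun v _ => by ring
  rw [Finset.sum_congr rfl (fun w _ => hstep w)]
  simp only [apply_ite Complex.ofReal, Complex.ofReal_one, Complex.ofReal_zero, ite_mul,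
    one_mul, zero_mul]
  rw [Finset.sum_ite_eq (Finset.univ : Finset A) (⟨x, hx⟩ : A) (fun w => φ w.1),
    if_pos (Finset.mem_univ _)]

lemma nu_eq (hnonneg : ∀ x y, 0 ≤ P x y) (hrow : ∀ x, ∑ y, P x y = 1)
    (hirr : ∀ x y, ∃ n, 1 ≤ n ∧ 0 < (P ^ n) x y)
    (A B : Finset X) {z₀ : X} (hz₀ : z₀ ∉ A) (hAB : ∀ z ∈ A, z ∉ B)
    {x y : X} (hx : x ∈ A) (hy : y ∈ B) :
    nuGen P A B x y - ∑ w ∈ A, P x w * nuGen P A B w y = P x y := by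
  have hnu : ∀ (z : X) (hz : z ∈ A), nuGen P A B z y
      = ∑ w : A, green P A ⟨z, hz⟩ w * P w.1 y := by
    intro z hz
    unfold nuGen
    rw [if_neg (hAB z hz), dif_pos hz, if_pos hy]
  rw [hnu x hx]
  rw [← Finset.sum_coe_sort A (fun w => P x w * nuGen P A B w y)]
  have hrw : ∀ w : A, P x w.1 * nuGen P A B w.1 y
      = ∑ v : A, P x w.1 * (green P A w v * P v.1 y) := by
    intro w
    rw [hnu w.1 w.2, Finset.mul_sum]
  rw [Finset.sum_congr rfl (fun w _ => hrw w), Finset.sum_comm, ← Finset.sum_sub_distrib]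
  have hstep : ∀ w : A, green P A ⟨x, hx⟩ w * P w.1 y
      - ∑ v : A, P x v.1 * (green P A v w * P w.1 y)
      = (if (⟨x, hx⟩ : A) = w then (1:ℝ) else 0) * P w.1 y := by
    intro w
    have hd := green_delta P hnonneg hrow hirr A hz₀ ⟨x, hx⟩ w
    rw [← hd, sub_mul, Finset.sum_mul]
    congr 1
    exact Finset.sum_congr rfl fun v _ => by ring
  rw [Finset.sum_congr rfl (fun w _ => hstep w)]
  simp only [ite_mul, one_mul, zero_mul]
  rw [Finset.sum_ite_eq (Finset.univ : Finset A) (⟨x, hx⟩ : A) (fun w => P w.1 y),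
    if_pos (Finset.mem_univ _)]

lemma harm_zero_C (hnonneg : ∀ x y, 0 ≤ P x y) (hrow : ∀ x, ∑ y, P x y = 1)
    (hirr : ∀ x y, ∃ n, 1 ≤ n ∧ 0 < (P ^ n) x y)
    (A : Finset X) {z₀ : X} (hz₀ : z₀ ∉ A) (d : X → ℂ)
    (hd0 : ∀ x, x ∉ A → d x = 0) (hharm : ∀ x ∈ A, d x = ∑ w, (P x w : ℂ) * d w) :
    ∀ x, d x = 0 := by
  have hre := harm_zero P hnonneg hrow hirr A hz₀ (fun z => (d z).re)
    (fun x hx => by simp only [hd0 x hx]; simp)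
    (fun x hx => by
      have h := congrArg Complex.re (hharm x hx)
      rw [Complex.re_sum] at h
      simpa [Complex.mul_re] using h)
  have him := harm_zero P hnonneg hrow hirr A hz₀ (fun z => (d z).im)
    (fun x hx => by simp only [hd0 x hx]; simp)
    (fun x hx => by
      have h := congrArg Complex.im (hharm x hx)
      rw [Complex.im_sum] at h
      simpa [Complex.mul_im] using h)
  intro x
  have h1 := hre x
  have h2 := him x
  apply Complex.ext <;> simpa using ‹_›

lemma lap_ker_const (hnonneg : ∀ x y, 0 ≤ P x y) (hrow : ∀ x, ∑ y, P x y = 1)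
    (hirr : ∀ x y, ∃ n, 1 ≤ n ∧ 0 < (P ^ n) x y)
    (u : X → ℂ) (hl : ∀ x, lap P u x = 0) (x₀ : X) : ∃ c, ∀ x, u x = c := by
  have hharm : ∀ x, u x = ∑ w, (P x w : ℂ) * u w := by
    intro x
    have := hl x
    unfold lap at this
    linear_combination -this
  refine ⟨u x₀, fun x => ?_⟩
  have hre := harm_const P hnonneg hrow hirr (fun z => (u z).re)
    (fun z => by
      have h := congrArg Complex.re (hharm z)
      rw [Complex.re_sum] at h
      simpa [Complex.mul_re] using h) x x₀
  have him := harm_const P hnonneg hrow hirr (fun z => (u z).im)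
    (fun z => by
      have h := congrArg Complex.im (hharm z)
      rw [Complex.im_sum] at h
      simpa [Complex.mul_im] using h) x x₀
  apply Complex.ext <;> simpa using ‹_›

lemma pi_lap (hrow : ∀ x, ∑ y, P x y = 1) (π : X → ℝ)
    (hπstat : ∀ y, ∑ x, π x * P x y = π y) (u : X → ℂ) :
    ∑ x, (π x : ℂ) * lap P u x = 0 := by
  unfold lap
  simp only [mul_sub, Finset.sum_sub_distrib]
  have h1 : ∑ x, (π x : ℂ) * ∑ y, (P x y : ℂ) * u y = ∑ y, (π y : ℂ) * u y := by
    simp only [Finset.mul_sum]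
    rw [Finset.sum_comm]
    refine Finset.sum_congr rfl fun y _ => ?_
    have h2 : ((∑ x, π x * P x y : ℝ) : ℂ) = (π y : ℂ) := by rw [hπstat y]
    push_cast at h2
    rw [show (∑ x, (π x : ℂ) * ((P x y : ℂ) * u y)) = (∑ x, (π x : ℂ) * (P x y : ℂ)) * u y by
      rw [Finset.sum_mul]; exact Finset.sum_congr rfl fun x _ => by ring, h2]
  rw [h1, sub_self]


lemma mulVecC_add (M : Matrix X X ℝ) (a b : X → ℂ) (x : X) :
    mulVecC M (fun z => a z + b z) x = mulVecC M a x + mulVecC M b x := by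
  unfold mulVecC
  rw [← Finset.sum_add_distrib]
  exact Finset.sum_congr rfl fun y _ => by ring

lemma neg_lap_eq (v : X → ℂ) (x : X) :
    v x - ∑ y, (P x y : ℂ) * v y = -(lap P v x) := by
  unfold lap; ring

lemma solve_poisson (hnonneg : ∀ x y, 0 ≤ P x y) (hrow : ∀ x, ∑ y, P x y = 1)
    (hirr : ∀ x y, ∃ n, 1 ≤ n ∧ 0 < (P ^ n) x y)
    (π : X → ℝ) (hπstat : ∀ y, ∑ x, π x * P x y = π y) (hπpos : ∀ x, 0 < π x)
    (o : X) (v : X → ℂ) (hv : ∑ x, (π x : ℂ) * v x = 0) :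
    ∀ x, mulVecC (greenExt P (Finset.univ.erase o)) v x
      - ∑ y, (P x y : ℂ) * mulVecC (greenExt P (Finset.univ.erase o)) v y = v x := by
  set E := Finset.univ.erase o with hE
  have ho : o ∉ E := fun h => (Finset.mem_erase.mp h).1 rfl
  set U : X → ℂ := mulVecC (greenExt P E) v with hU
  have hUo : U o = 0 := mulVecC_greenExt_of_notMem P E v ho
  have hF : ∀ x, x ∈ E → U x - ∑ y, (P x y : ℂ) * U y = v x := by
    intro x hx
    have hsplit : ∑ y, (P x y : ℂ) * U y = ∑ y ∈ E, (P x y : ℂ) * U y := by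
      symm
      apply Finset.sum_subset (Finset.subset_univ E)
      intro y _ hyE
      have hyo : y = o := by
        by_contra h
        exact hyE (Finset.mem_erase.mpr ⟨h, Finset.mem_univ y⟩)
      rw [hyo, hUo, mul_zero]
    rw [hsplit]
    exact green_eq_C P hnonneg hrow hirr E ho v hx
  intro x
  by_cases hx : x ∈ E
  · exact hF x hx
  · have hxo : x = o := by
      by_contra h
      exact hx (Finset.mem_erase.mpr ⟨h, Finset.mem_univ x⟩)
    subst hxo
    have hsum : ∑ z, (π z : ℂ) * (U z - ∑ y, (P z y : ℂ) * U y) = 0 := by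
      have hp := pi_lap P hrow π hπstat U
      rw [show ∑ z, (π z : ℂ) * (U z - ∑ y, (P z y : ℂ) * U y)
          = - ∑ z, (π z : ℂ) * lap P U z by
        rw [← Finset.sum_neg_distrib]
        refine Finset.sum_congr rfl fun z _ => ?_
        rw [neg_lap_eq P U z]
        ring, hp, neg_zero]
    have hsplit1 := Finset.sum_erase_add Finset.univ
      (fun z => (π z : ℂ) * (U z - ∑ y, (P z y : ℂ) * U y)) (Finset.mem_univ x)
    have hsplit2 := Finset.sum_erase_add Finset.univ
      (fun z => (π z : ℂ) * v z) (Finset.mem_univ x)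
    have heq : ∑ z ∈ Finset.univ.erase x, (π z : ℂ) * (U z - ∑ y, (P z y : ℂ) * U y)
        = ∑ z ∈ Finset.univ.erase x, (π z : ℂ) * v z := by
      refine Finset.sum_congr rfl fun z hz => ?_
      rw [hF z (hE ▸ hz)]
    have hπx : (π x : ℂ) ≠ 0 := by
      simpa using (ne_of_gt (hπpos x))
    have hfinal : (π x : ℂ) * (U x - ∑ y, (P x y : ℂ) * U y) = (π x : ℂ) * v x := by
      rw [hsum] at hsplit1
      rw [hv] at hsplit2
      rw [heq] at hsplit1
      linear_combination hsplit1 - hsplit2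
    exact mul_left_cancel₀ hπx hfinal

end Aux

/-- The bi-Laplace Neumann problem `Δ²u = f` on `X°`, `∂ₙu = g` on
`∂X` is solvable iff `∫_{X°} G_{X°}f dπ + ∫_{∂X} g dν_π = 0`; in that case the set of
all solutions is `{G_{X∖{o}} G_{X°} f + G_{X∖{o}} h + c}` with `h(x) = ∫_{∂X} g dν_x`. -/
theorem bilaplace_neumann_problem {X : Type*} [Fintype X] [DecidableEq X]
    (P : Matrix X X ℝ)
    (hcard : 1 < Fintype.card X)
    (hnonneg : ∀ x y, 0 ≤ P x y)
    (hrow : ∀ x, ∑ y, P x y = 1)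
    (hirr : ∀ x y, ∃ n, 1 ≤ n ∧ 0 < (P ^ n) x y)
    (π : X → ℝ)
    (hπstat : ∀ y, ∑ x, π x * P x y = π y)
    (hπpos : ∀ x, 0 < π x) (hπsum : ∑ x, π x = 1)
    (Bnd : Finset X) (hB : Bnd.Nonempty) (hB' : Bnd ≠ Finset.univ)
    (o : X) (f g : X → ℂ) :
    ((∃ u : X → ℂ,
        (∀ x, x ∉ Bnd → lap P (lap P u) x = f x) ∧ (∀ x ∈ Bnd, -lap P u x = g x)) ↔
      (∑ x ∈ Bndᶜ, (π x : ℂ) * mulVecC (greenExt P Bndᶜ) f x) +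
        ∑ y ∈ Bnd, ((π y + ∑ x ∈ Bndᶜ, π x * nuGen P Bndᶜ Bnd x y : ℝ) : ℂ) * g y = 0) ∧
    ((∑ x ∈ Bndᶜ, (π x : ℂ) * mulVecC (greenExt P Bndᶜ) f x) +
        ∑ y ∈ Bnd, ((π y + ∑ x ∈ Bndᶜ, π x * nuGen P Bndᶜ Bnd x y : ℝ) : ℂ) * g y = 0 →
      ∀ w : X → ℂ,
        ((∀ x, x ∉ Bnd → lap P (lap P w) x = f x) ∧ (∀ x ∈ Bnd, -lap P w x = g x)) ↔
        ∃ c : ℂ, w = fun x =>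
          mulVecC (greenExt P (Finset.univ.erase o)) (mulVecC (greenExt P Bndᶜ) f) x +
            mulVecC (greenExt P (Finset.univ.erase o))
              (fun z => ∑ y ∈ Bnd, (nuGen P Bndᶜ Bnd z y : ℂ) * g y) x + c) := by
  classical
  obtain ⟨b, hb⟩ := hB
  have hbA : b ∉ Bndᶜ := by simp [hb]
  -- hfun and v₀
  set hfun : X → ℂ := fun z => ∑ y ∈ Bnd, (nuGen P Bndᶜ Bnd z y : ℂ) * g y with hfun_def
  set v₀ : X → ℂ := fun x => mulVecC (greenExt P Bndᶜ) f x + hfun x with hv₀_def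
  have HB : ∀ x ∈ Bnd, hfun x = g x := by
    intro x hx
    rw [hfun_def]
    simp only
    have hcg : ∀ y ∈ Bnd, (nuGen P Bndᶜ Bnd x y : ℂ) * g y = if x = y then g y else 0 := by
      intro y hy
      unfold nuGen
      rw [if_pos hx]
      split_ifs with h <;> norm_num
    have hstep : ∑ y ∈ Bnd, (nuGen P Bndᶜ Bnd x y : ℂ) * g y
        = ∑ y ∈ Bnd, (if x = y then g y else 0) := Finset.sum_congr rfl hcg
    rw [hstep, Finset.sum_ite_eq Bnd x g, if_pos hx]
  have D1 : ∀ x ∈ Bnd, v₀ x = g x := by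
    intro x hx
    have hxA : x ∉ Bndᶜ := by simp [hx]
    rw [hv₀_def]
    simp only
    rw [mulVecC_greenExt_of_notMem P Bndᶜ f hxA, HB x hx, zero_add]
  have D2 : ∀ x ∈ Bndᶜ, v₀ x - ∑ y, (P x y : ℂ) * v₀ y = f x := by
    intro x hx
    have hxB : x ∉ Bnd := by simpa using hx
    have hsplit : ∑ y, (P x y : ℂ) * v₀ y
        = ∑ y ∈ Bndᶜ, (P x y : ℂ) * v₀ y + ∑ y ∈ Bnd, (P x y : ℂ) * v₀ y := by
      have h := Finset.sum_add_sum_compl Bndᶜ (fun y => (P x y : ℂ) * v₀ y)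
      rw [compl_compl] at h
      exact h.symm
    have h1 : ∑ y ∈ Bnd, (P x y : ℂ) * v₀ y = ∑ y ∈ Bnd, (P x y : ℂ) * g y :=
      Finset.sum_congr rfl fun y hy => by rw [D1 y hy]
    have h2 : ∑ y ∈ Bndᶜ, (P x y : ℂ) * v₀ y
        = ∑ y ∈ Bndᶜ, (P x y : ℂ) * mulVecC (greenExt P Bndᶜ) f y
          + ∑ y ∈ Bndᶜ, (P x y : ℂ) * hfun y := by
      rw [← Finset.sum_add_distrib]
      refine Finset.sum_congr rfl fun y _ => ?_
      rw [hv₀_def]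
      ring
    have hg := green_eq_C P hnonneg hrow hirr Bndᶜ hbA f hx
    have hnupart : hfun x - ∑ y ∈ Bndᶜ, (P x y : ℂ) * hfun y
        = ∑ y ∈ Bnd, (P x y : ℂ) * g y := by
      rw [hfun_def]
      simp only
      have hswap : ∑ w ∈ Bndᶜ, (P x w : ℂ) * ∑ y ∈ Bnd, (nuGen P Bndᶜ Bnd w y : ℂ) * g y
          = ∑ y ∈ Bnd, (∑ w ∈ Bndᶜ, (P x w : ℂ) * (nuGen P Bndᶜ Bnd w y : ℂ)) * g y := by
        simp only [Finset.mul_sum]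
        rw [Finset.sum_comm]
        refine Finset.sum_congr rfl fun y _ => ?_
        rw [Finset.sum_mul]
        exact Finset.sum_congr rfl fun w _ => by ring
      rw [hswap, ← Finset.sum_sub_distrib]
      refine Finset.sum_congr rfl fun y hy => ?_
      have hne := nu_eq P hnonneg hrow hirr Bndᶜ Bnd hbA
        (fun z hz => by simpa using hz) hx hy
      have hcast : ((nuGen P Bndᶜ Bnd x y - ∑ w ∈ Bndᶜ, P x w * nuGen P Bndᶜ Bnd w y : ℝ) : ℂ)
          = (P x y : ℂ) := by rw [hne]
      push_cast at hcast
      linear_combination (g y) * hcast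
    rw [hsplit, h1, h2, hv₀_def]
    simp only
    linear_combination hg + hnupart
  -- Dirichlet uniqueness
  have SU : ∀ v : X → ℂ, (∀ x, x ∉ Bnd → v x - ∑ y, (P x y : ℂ) * v y = f x) →
      (∀ x ∈ Bnd, v x = g x) → ∀ x, v x = v₀ x := by
    intro v hv1 hv2
    have hz := harm_zero_C P hnonneg hrow hirr Bndᶜ hbA (fun z => v z - v₀ z)
      (fun x hx => by
        have hxB : x ∈ Bnd := by simpa using hx
        rw [hv2 x hxB, D1 x hxB, sub_self])
      (fun x hx => by
        have hxB : x ∉ Bnd := by simpa using hx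
        have e1 := hv1 x hxB
        have e2 := D2 x hx
        rw [show ∑ w, (P x w : ℂ) * (v w - v₀ w)
            = ∑ w, (P x w : ℂ) * v w - ∑ w, (P x w : ℂ) * v₀ w by
          rw [← Finset.sum_sub_distrib]
          exact Finset.sum_congr rfl fun w _ => by ring]
        linear_combination e1 - e2)
    intro x
    have hzz : v x - v₀ x = 0 := hz x
    linear_combination hzz
  -- condition expression = ∫ v₀ dπ
  have SE : (∑ x ∈ Bndᶜ, (π x : ℂ) * mulVecC (greenExt P Bndᶜ) f x) +
        ∑ y ∈ Bnd, ((π y + ∑ x ∈ Bndᶜ, π x * nuGen P Bndᶜ Bnd x y : ℝ) : ℂ) * g y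
      = ∑ x, (π x : ℂ) * v₀ x := by
    have hR : ∑ x, (π x : ℂ) * v₀ x
        = ∑ x, (π x : ℂ) * mulVecC (greenExt P Bndᶜ) f x + ∑ x, (π x : ℂ) * hfun x := by
      rw [← Finset.sum_add_distrib]
      refine Finset.sum_congr rfl fun x _ => ?_
      rw [hv₀_def]
      ring
    rw [hR]
    congr 1
    · exact Finset.sum_subset (Finset.subset_univ _) (fun x _ hx => by
        rw [mulVecC_greenExt_of_notMem P Bndᶜ f hx, mul_zero])
    · have hsplit : ∑ x, (π x : ℂ) * hfun x
          = ∑ x ∈ Bnd, (π x : ℂ) * hfun x + ∑ x ∈ Bndᶜ, (π x : ℂ) * hfun x :=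
        (Finset.sum_add_sum_compl Bnd _).symm
      have hbd : ∑ x ∈ Bnd, (π x : ℂ) * hfun x = ∑ x ∈ Bnd, (π x : ℂ) * g x :=
        Finset.sum_congr rfl fun x hx => by rw [HB x hx]
      have hint : ∑ x ∈ Bndᶜ, (π x : ℂ) * hfun x
          = ∑ y ∈ Bnd, ((∑ x ∈ Bndᶜ, π x * nuGen P Bndᶜ Bnd x y : ℝ) : ℂ) * g y := by
        rw [hfun_def]
        simp only [Finset.mul_sum]
        rw [Finset.sum_comm]
        refine Finset.sum_congr rfl fun y _ => ?_
        push_cast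
        rw [Finset.sum_mul]
        exact Finset.sum_congr rfl fun x _ => by ring
      rw [hsplit, hbd, hint]
      rw [← Finset.sum_add_distrib]
      refine Finset.sum_congr rfl fun y hy => ?_
      push_cast
      ring
  -- from solvability data to -Δu = v₀
  have hpre : ∀ u : X → ℂ,
      ((∀ x, x ∉ Bnd → lap P (lap P u) x = f x) ∧ (∀ x ∈ Bnd, -lap P u x = g x)) →
      ∀ x, -lap P u x = v₀ x := by
    rintro u ⟨h1, h2⟩
    apply SU (fun x => -lap P u x)
    · intro x hx
      have e1 := h1 x hx
      unfold lap at e1 ⊢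
      simp only [mul_sub, mul_neg, Finset.sum_sub_distrib, Finset.sum_neg_distrib] at e1 ⊢
      linear_combination e1
    · exact h2
  have hsol : ∀ u : X → ℂ, (∀ x, -lap P u x = v₀ x) →
      ((∀ x, x ∉ Bnd → lap P (lap P u) x = f x) ∧ (∀ x ∈ Bnd, -lap P u x = g x)) := by
    intro u hu
    constructor
    · intro x hx
      have hxc : x ∈ Bndᶜ := by simpa using hx
      have e2 := D2 x hxc
      have hlf : lap P u = fun z => -v₀ z := funext fun z => by
        have := hu z
        linear_combination -this
      rw [hlf]
      unfold lap
      simp only [mul_neg, Finset.sum_neg_distrib]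
      linear_combination e2
    · intro x hx
      rw [hu x]
      exact D1 x hx
  constructor
  · constructor
    · rintro ⟨u, hu⟩
      have h := hpre u hu
      rw [SE]
      rw [show ∑ x, (π x : ℂ) * v₀ x = - ∑ x, (π x : ℂ) * lap P u x by
        rw [← Finset.sum_neg_distrib]
        refine Finset.sum_congr rfl fun x _ => ?_
        rw [← h x]
        ring]
      rw [pi_lap P hrow π hπstat u, neg_zero]
    · intro hcond
      rw [SE] at hcond
      refine ⟨mulVecC (greenExt P (Finset.univ.erase o)) v₀, hsol _ ?_⟩
      intro x
      have hp := solve_poisson P hnonneg hrow hirr π hπstat hπpos o v₀ hcond x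
      rw [neg_lap_eq] at hp
      exact hp
  · intro hcond w
    rw [SE] at hcond
    have hp := solve_poisson P hnonneg hrow hirr π hπstat hπpos o v₀ hcond
    have hUl : ∀ x, -lap P (mulVecC (greenExt P (Finset.univ.erase o)) v₀) x = v₀ x := by
      intro x
      have := hp x
      rw [neg_lap_eq] at this
      exact this
    have hUx : ∀ x, mulVecC (greenExt P (Finset.univ.erase o)) v₀ x
        = mulVecC (greenExt P (Finset.univ.erase o)) (mulVecC (greenExt P Bndᶜ) f) x
          + mulVecC (greenExt P (Finset.univ.erase o)) hfun x := by
      intro x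
      rw [hv₀_def]
      exact mulVecC_add _ _ _ x
    constructor
    · intro hw
      have hwv := hpre w hw
      have hker : ∀ x, lap P (fun z => w z - mulVecC (greenExt P (Finset.univ.erase o)) v₀ z) x
          = 0 := by
        intro x
        have e1 := hwv x
        have e2 := hUl x
        unfold lap at e1 e2 ⊢
        simp only [mul_sub, Finset.sum_sub_distrib]
        linear_combination e2 - e1
      obtain ⟨c, hc⟩ := lap_ker_const P hnonneg hrow hirr _ hker b
      refine ⟨c, funext fun x => ?_⟩
      have h1 := hc x
      have h2 := hUx x
      linear_combination h1 + h2
    · rintro ⟨c, rfl⟩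
      apply hsol
      intro x
      have hfn : (fun z => mulVecC (greenExt P (Finset.univ.erase o))
            (mulVecC (greenExt P Bndᶜ) f) z
          + mulVecC (greenExt P (Finset.univ.erase o)) hfun z + c)
          = (fun z => mulVecC (greenExt P (Finset.univ.erase o)) v₀ z + c) :=
        funext fun z => by rw [← hUx z]
      rw [hfn]
      have e2 := hUl x
      unfold lap at e2 ⊢
      have hone : ∑ y, (P x y : ℂ) * c = c := by
        rw [← Finset.sum_mul]
        rw [show ∑ y, ((P x y : ℝ) : ℂ) = ((∑ y, P x y : ℝ) : ℂ) by push_cast; ring]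
        rw [hrow x, Complex.ofReal_one, one_mul]
      simp only [mul_add, Finset.sum_add_distrib]
      rw [hone]
      linear_combination e2
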